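/- arXiv:2011.00888 — 2 statements merged into one kernel-verified Lean document; each statement's English description precedes it below -/
import Mathlib

section
/- Let ε > 0 and τ ∈ (0,1). Suppose H_ε and H_{2ε} are differentiable at the points where they are evaluated below, satisfy their defining relations U(H_μ(x)) = U(x) + μ in neighborhoods of those points, and all reception events involved are sub-threshold (i.e. the points τ, H_ε(τ), τ + H_{2ε}(τ) and their images lie in [0,1]). Then the second nonzero eigenvalue of the Jacobian of the return map of the S₃×S₂ cluster periodic orbit, λ₂ = (−1 + 2·H_ε'(τ))·H_ε'(H_ε(τ))·H_{2ε}'(τ + H_{2ε}(τ)), is strictly greater than 1. -/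
/-!
Differentiating `U ∘ H = U + μ` gives `U'(H x) · H'(x) = U'(x)`. Since `U` is increasing,
`H x > x`, and since `U'` is decreasing and positive, `0 < U'(H x) < U'(x)`, so `H'(x) > 1`.
With all three derivative factors of `λ₂` larger than `1`, so is `-1 + 2 Hε'(τ)`, and hence `λ₂`.
-/

open Filter Set Topology

lemma deriv_comp_mul_deriv_eq_of_comp_eventuallyEq_add_const {U H : ℝ → ℝ} {μ x : ℝ}
    (hU : DifferentiableAt ℝ U (H x)) (hH : DifferentiableAt ℝ H x)
    (hrel : ∀ᶠ y in 𝓝 x, U (H y) = U y + μ) :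
    deriv U (H x) * deriv H x = deriv U x := by
  have hcomp : (fun y => U (H y)) =ᶠ[𝓝 x] fun y => U y + μ := hrel
  rw [← deriv_comp x hU hH, Function.comp_def, hcomp.deriv_eq, deriv_add_const]

lemma one_lt_deriv_of_comp_eventuallyEq_add_const {U H : ℝ → ℝ} {s : Set ℝ} {μ x : ℝ}
    (hmono : StrictMonoOn U s) (hanti : StrictAntiOn (deriv U) s)
    (hU : DifferentiableAt ℝ U (H x)) (hpos : 0 < deriv U (H x))
    (hμ : 0 < μ) (hx : x ∈ s) (hHx : H x ∈ s)
    (hrel : ∀ᶠ y in 𝓝 x, U (H y) = U y + μ) (hH : DifferentiableAt ℝ H x) :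
    1 < deriv H x := by
  have hchain := deriv_comp_mul_deriv_eq_of_comp_eventuallyEq_add_const hU hH hrel
  have hlt : x < H x := (hmono.lt_iff_lt hx hHx).1 (by linarith [hrel.self_of_nhds])
  have hderiv_lt : deriv U (H x) < deriv U x := hanti hx hHx hlt
  nlinarith

lemma strictMonoOn_Icc_of_deriv_pos {U : ℝ → ℝ} {a b : ℝ} (hU : Continuous U)
    (hU' : ∀ x ∈ Icc a b, 0 < deriv U x) : StrictMonoOn U (Icc a b) :=
  strictMonoOn_of_deriv_pos (convex_Icc a b) hU.continuousOn
    fun x hx => hU' x (interior_subset hx)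

lemma strictAntiOn_Icc_deriv_of_deriv_deriv_neg {U : ℝ → ℝ} {a b : ℝ} (hU : ContDiff ℝ 2 U)
    (hU'' : ∀ x ∈ Icc a b, deriv (deriv U) x < 0) : StrictAntiOn (deriv U) (Icc a b) :=
  strictAntiOn_of_deriv_neg (convex_Icc a b) (hU.continuous_deriv (by norm_num)).continuousOn
    fun x hx => hU'' x (interior_subset hx)

lemma one_lt_two_mul_sub_one_mul_mul {a b c : ℝ} (ha : 1 < a) (hb : 1 < b) (hc : 1 < c) :
    1 < (-1 + 2 * a) * b * c :=
  one_lt_mul_of_lt_of_le (one_lt_mul_of_lt_of_le (by linarith) hb.le) hc.le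

theorem s3s2_eigenvalue_two_gt_one_general
    (U Hε H2ε : ℝ → ℝ) (ε τ : ℝ)
    (hU : ContDiff ℝ 2 U)
    (hU' : ∀ x ∈ Set.Icc (0:ℝ) 1, 0 < deriv U x)
    (hU'' : ∀ x ∈ Set.Icc (0:ℝ) 1, deriv (deriv U) x < 0)
    (hε : 0 < ε) (hτ : τ ∈ Set.Ioo (0:ℝ) 1)
    -- defining relations in neighborhoods of the evaluation points
    (hrel1 : ∀ᶠ x in nhds τ, U (Hε x) = U x + ε)
    (hrel2 : ∀ᶠ x in nhds (Hε τ), U (Hε x) = U x + ε)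
    (hrel4 : ∀ᶠ x in nhds (τ + H2ε τ), U (H2ε x) = U x + 2 * ε)
    -- all reception events are sub-threshold: points and images lie in [0,1]
    (hm1 : Hε τ ∈ Set.Icc (0:ℝ) 1)
    (hm2 : Hε (Hε τ) ∈ Set.Icc (0:ℝ) 1)
    (hm4 : τ + H2ε τ ∈ Set.Icc (0:ℝ) 1)
    (hm5 : H2ε (τ + H2ε τ) ∈ Set.Icc (0:ℝ) 1)
    -- differentiability at the evaluation points
    (hd1 : DifferentiableAt ℝ Hε τ)
    (hd2 : DifferentiableAt ℝ Hε (Hε τ))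
    (hd3 : DifferentiableAt ℝ H2ε (τ + H2ε τ)) :
    1 < (-1 + 2 * deriv Hε τ) * deriv Hε (Hε τ) * deriv H2ε (τ + H2ε τ) := by
  have hmono := strictMonoOn_Icc_of_deriv_pos hU.continuous hU'
  have hanti := strictAntiOn_Icc_deriv_of_deriv_deriv_neg hU hU''
  have hUdiff : Differentiable ℝ U := hU.differentiable (by norm_num)
  have key {H : ℝ → ℝ} {μ x : ℝ} (hμ : 0 < μ) (hx : x ∈ Icc (0:ℝ) 1) (hHx : H x ∈ Icc (0:ℝ) 1)
      (hrel : ∀ᶠ y in 𝓝 x, U (H y) = U y + μ) (hH : DifferentiableAt ℝ H x) : 1 < deriv H x :=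
    one_lt_deriv_of_comp_eventuallyEq_add_const hmono hanti (hUdiff _) (hU' _ hHx) hμ hx hHx
      hrel hH
  exact one_lt_two_mul_sub_one_mul_mul
    (key hε (Ioo_subset_Icc_self hτ) hm1 hrel1 hd1)
    (key hε hm1 hm2 hrel2 hd2)
    (key (by positivity) hm4 hm5 hrel4 hd3)

/-- The second nonzero eigenvalue of the Jacobian of the return map of the `S₃ × S₂` cluster
periodic orbit, `λ₂ = (-1 + 2 Hε'(τ)) Hε'(Hε(τ)) H2ε'(τ + H2ε(τ))`, is strictly
greater than 1. -/
theorem s3s2_eigenvalue_two_gt_one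
    (U Hε H2ε : ℝ → ℝ) (ε τ : ℝ)
    (hU : ContDiff ℝ 2 U) (hU0 : U 0 = 0) (hU1 : U 1 = 1)
    (hU' : ∀ x ∈ Set.Icc (0:ℝ) 1, 0 < deriv U x)
    (hU'' : ∀ x ∈ Set.Icc (0:ℝ) 1, deriv (deriv U) x < 0)
    (hε : 0 < ε) (hτ : τ ∈ Set.Ioo (0:ℝ) 1)
    -- defining relations in neighborhoods of the evaluation points
    (hrel1 : ∀ᶠ x in nhds τ, U (Hε x) = U x + ε)
    (hrel2 : ∀ᶠ x in nhds (Hε τ), U (Hε x) = U x + ε)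
    (hrel3 : ∀ᶠ x in nhds τ, U (H2ε x) = U x + 2 * ε)
    (hrel4 : ∀ᶠ x in nhds (τ + H2ε τ), U (H2ε x) = U x + 2 * ε)
    -- all reception events are sub-threshold: points and images lie in [0,1]
    (hm1 : Hε τ ∈ Set.Icc (0:ℝ) 1)
    (hm2 : Hε (Hε τ) ∈ Set.Icc (0:ℝ) 1)
    (hm3 : H2ε τ ∈ Set.Icc (0:ℝ) 1)
    (hm4 : τ + H2ε τ ∈ Set.Icc (0:ℝ) 1)
    (hm5 : H2ε (τ + H2ε τ) ∈ Set.Icc (0:ℝ) 1)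
    -- differentiability at the evaluation points
    (hd1 : DifferentiableAt ℝ Hε τ)
    (hd2 : DifferentiableAt ℝ Hε (Hε τ))
    (hd3 : DifferentiableAt ℝ H2ε (τ + H2ε τ)) :
    1 < (-1 + 2 * deriv Hε τ) * deriv Hε (Hε τ) * deriv H2ε (τ + H2ε τ) :=
  s3s2_eigenvalue_two_gt_one_general U Hε H2ε ε τ hU hU' hU'' hε hτ hrel1 hrel2 hrel4 hm1 hm2 hm4
    hm5 hd1 hd2 hd3
end

section
/- Let ε > 0 and 0 < τ' < τ < 1. Suppose H_ε and H_{2ε} are differentiable at the points where they are evaluated below, satisfy their defining relations U(H_μ(x)) = U(x) + μ in neighborhoods of those points, and all reception events involved are sub-threshold (i.e. the points τ', τ − τ' + H_{2ε}(τ'), τ' + H_ε(τ − τ' + H_{2ε}(τ')) and their images lie in [0,1]). Then the unique nonzero eigenvalue of the Jacobian of the return map of the S₂×S₂×S₁ cluster periodic orbit, λ₁ = H_ε'(τ' + H_ε(τ − τ' + H_{2ε}(τ')))·(−1 + H_ε'(τ − τ' + H_{2ε}(τ'))·(1 + H_{2ε}'(τ'))), is strictly greater than 1. -/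
/-!
Differentiating `U (H x) = U x + μ` gives `U'(H x) · H'(x) = U'(x)`. Since `U` is increasing,
`H x > x`, and since `U'` is decreasing and positive on `[0,1]`, `H'(x) = U'(x) / U'(H x) > 1`
at every sub-threshold reception (Lemma 1). With all three derivatives in `λ₁` greater than 1,
the bracket `-1 + a (1 + b)` exceeds 1, hence so does `λ₁`.
-/

open Set Filter

lemma deriv_comp_mul_deriv_eq_of_eventually_comp_eq_add {U H : ℝ → ℝ} {μ x : ℝ}
    (hUd : DifferentiableAt ℝ U (H x)) (hHd : DifferentiableAt ℝ H x)
    (hrel : ∀ᶠ y in nhds x, U (H y) = U y + μ) :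
    deriv U (H x) * deriv H x = deriv U x := by
  have h : deriv (fun y => U (H y)) x = deriv (fun y => U y + μ) x :=
    EventuallyEq.deriv_eq hrel
  rwa [← Function.comp_def, deriv_comp x hUd hHd, deriv_add_const] at h

lemma one_lt_deriv_of_comp_eq_add {U H : ℝ → ℝ} {s : Set ℝ} {μ x : ℝ}
    (hmono : StrictMonoOn U s) (hanti : StrictAntiOn (deriv U) s)
    (hpos : 0 < deriv U (H x)) (hμ : 0 < μ)
    (hUd : DifferentiableAt ℝ U (H x)) (hHd : DifferentiableAt ℝ H x)
    (hrel : ∀ᶠ y in nhds x, U (H y) = U y + μ) (hx : x ∈ s) (hHx : H x ∈ s) :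
    1 < deriv H x := by
  have hlt : x < H x := (hmono.lt_iff_lt hx hHx).mp (by linarith [hrel.self_of_nhds])
  have hderiv := deriv_comp_mul_deriv_eq_of_eventually_comp_eq_add hUd hHd hrel
  have hdec : deriv U (H x) < deriv U x := hanti hx hHx hlt
  by_contra! hle
  nlinarith

lemma pulse_response_deriv_gt_one {U H : ℝ → ℝ} {μ x : ℝ}
    (hU : ContDiff ℝ 2 U)
    (hU' : ∀ y ∈ Icc (0:ℝ) 1, 0 < deriv U y)
    (hU'' : ∀ y ∈ Icc (0:ℝ) 1, deriv (deriv U) y < 0)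
    (hμ : 0 < μ) (hrel : ∀ᶠ y in nhds x, U (H y) = U y + μ)
    (hx : x ∈ Icc (0:ℝ) 1) (hHx : H x ∈ Icc (0:ℝ) 1)
    (hHd : DifferentiableAt ℝ H x) : 1 < deriv H x := by
  have hUd : Differentiable ℝ U := hU.differentiable (by norm_num)
  have hU'c : ContDiff ℝ 1 (deriv U) := (contDiff_succ_iff_deriv (n := 1)).mp hU |>.2.2
  have hmono : StrictMonoOn U (Icc 0 1) :=
    strictMonoOn_of_deriv_pos (convex_Icc 0 1) hUd.continuous.continuousOn
      fun y hy => hU' y (interior_subset hy)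
  have hanti : StrictAntiOn (deriv U) (Icc 0 1) :=
    strictAntiOn_of_deriv_neg (convex_Icc 0 1) hU'c.continuous.continuousOn
      fun y hy => hU'' y (interior_subset hy)
  exact one_lt_deriv_of_comp_eq_add hmono hanti (hU' _ hHx) hμ hUd.differentiableAt hHd hrel
    hx hHx

lemma one_lt_mul_neg_one_add_mul_one_add {a b c : ℝ} (ha : 1 < a) (hb : 1 < b) (hc : 1 < c) :
    1 < c * (-1 + a * (1 + b)) := by
  have hbracket : 1 < -1 + a * (1 + b) := by nlinarith
  nlinarith

theorem s2s2s1_eigenvalue_gt_one_general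
    (U Hε H2ε : ℝ → ℝ) (ε τ τ' : ℝ)
    (hU : ContDiff ℝ 2 U)
    (hU' : ∀ x ∈ Set.Icc (0:ℝ) 1, 0 < deriv U x)
    (hU'' : ∀ x ∈ Set.Icc (0:ℝ) 1, deriv (deriv U) x < 0)
    (hε : 0 < ε) (hτ'0 : 0 < τ')
    -- defining relations in neighborhoods of the evaluation points
    (hrel1 : ∀ᶠ x in nhds τ', U (H2ε x) = U x + 2 * ε)
    (hrel2 : ∀ᶠ x in nhds (τ - τ' + H2ε τ'), U (Hε x) = U x + ε)
    (hrel3 : ∀ᶠ x in nhds (τ' + Hε (τ - τ' + H2ε τ')), U (Hε x) = U x + ε)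
    -- all reception events are sub-threshold: points and images lie in [0,1]
    (hm1 : H2ε τ' ∈ Set.Icc (0:ℝ) 1)
    (hm2 : τ - τ' + H2ε τ' ∈ Set.Icc (0:ℝ) 1)
    (hm3 : Hε (τ - τ' + H2ε τ') ∈ Set.Icc (0:ℝ) 1)
    (hm4 : τ' + Hε (τ - τ' + H2ε τ') ∈ Set.Icc (0:ℝ) 1)
    (hm5 : Hε (τ' + Hε (τ - τ' + H2ε τ')) ∈ Set.Icc (0:ℝ) 1)
    -- differentiability at the evaluation points
    (hd1 : DifferentiableAt ℝ H2ε τ')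
    (hd2 : DifferentiableAt ℝ Hε (τ - τ' + H2ε τ'))
    (hd3 : DifferentiableAt ℝ Hε (τ' + Hε (τ - τ' + H2ε τ'))) :
    1 < deriv Hε (τ' + Hε (τ - τ' + H2ε τ')) *
        (-1 + deriv Hε (τ - τ' + H2ε τ') * (1 + deriv H2ε τ')) := by
  have hτ' : τ' ∈ Icc (0:ℝ) 1 := ⟨hτ'0.le, by linarith [hm3.1, hm4.2]⟩
  exact one_lt_mul_neg_one_add_mul_one_add
    (pulse_response_deriv_gt_one hU hU' hU'' hε hrel2 hm2 hm3 hd2)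
    (pulse_response_deriv_gt_one hU hU' hU'' (by positivity) hrel1 hτ' hm1 hd1)
    (pulse_response_deriv_gt_one hU hU' hU'' hε hrel3 hm4 hm5 hd3)

/-- The unique nonzero eigenvalue of the Jacobian of the return map of the `S₂ × S₂ × S₁`
cluster periodic orbit,
`λ₁ = Hε'(τ' + Hε(τ - τ' + H2ε(τ'))) (-1 + Hε'(τ - τ' + H2ε(τ')) (1 + H2ε'(τ')))`,
is strictly greater than 1. -/
theorem s2s2s1_eigenvalue_gt_one
    (U Hε H2ε : ℝ → ℝ) (ε τ τ' : ℝ)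
    (hU : ContDiff ℝ 2 U) (hU0 : U 0 = 0) (hU1 : U 1 = 1)
    (hU' : ∀ x ∈ Set.Icc (0:ℝ) 1, 0 < deriv U x)
    (hU'' : ∀ x ∈ Set.Icc (0:ℝ) 1, deriv (deriv U) x < 0)
    (hε : 0 < ε) (hτ'0 : 0 < τ') (hτ'τ : τ' < τ) (hτ1 : τ < 1)
    -- defining relations in neighborhoods of the evaluation points
    (hrel1 : ∀ᶠ x in nhds τ', U (H2ε x) = U x + 2 * ε)
    (hrel2 : ∀ᶠ x in nhds (τ - τ' + H2ε τ'), U (Hε x) = U x + ε)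
    (hrel3 : ∀ᶠ x in nhds (τ' + Hε (τ - τ' + H2ε τ')), U (Hε x) = U x + ε)
    -- all reception events are sub-threshold: points and images lie in [0,1]
    (hm1 : H2ε τ' ∈ Set.Icc (0:ℝ) 1)
    (hm2 : τ - τ' + H2ε τ' ∈ Set.Icc (0:ℝ) 1)
    (hm3 : Hε (τ - τ' + H2ε τ') ∈ Set.Icc (0:ℝ) 1)
    (hm4 : τ' + Hε (τ - τ' + H2ε τ') ∈ Set.Icc (0:ℝ) 1)
    (hm5 : Hε (τ' + Hε (τ - τ' + H2ε τ')) ∈ Set.Icc (0:ℝ) 1)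
    -- differentiability at the evaluation points
    (hd1 : DifferentiableAt ℝ H2ε τ')
    (hd2 : DifferentiableAt ℝ Hε (τ - τ' + H2ε τ'))
    (hd3 : DifferentiableAt ℝ Hε (τ' + Hε (τ - τ' + H2ε τ'))) :
    1 < deriv Hε (τ' + Hε (τ - τ' + H2ε τ')) *
        (-1 + deriv Hε (τ - τ' + H2ε τ') * (1 + deriv H2ε τ')) :=
  s2s2s1_eigenvalue_gt_one_general U Hε H2ε ε τ τ' hU hU' hU'' hε hτ'0 hrel1 hrel2 hrel3 hm1 hm2 hm3
    hm4 hm5 hd1 hd2 hd3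
end
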